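/- If x ∈ GL₆(𝕂) satisfies: the lower right 4×2 corner block of x has rank 1 and the lower right 2×2 corner block of x has rank 1, then x_right·x does not belong to Lie(P)·x + x·Lie(P)^τ. -/

import Mathlib

open Matrix

/-- The Lie algebra of the parabolic `P ⊆ GL₆(𝕂)`: block upper triangular `6 × 6`
matrices with respect to the partition `(2,2,2)` of `6`. -/
def LieP (𝕂 : Type*) [RCLike 𝕂] : Set (Matrix (Fin 6) (Fin 6) 𝕂) :=
  {p | ∀ i j : Fin 6, (j : ℕ) / 2 < (i : ℕ) / 2 → p i j = 0}

/-- `Lie(P)^τ`, the image of `Lie(P)` under matrix transpose. -/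
def LiePtau (𝕂 : Type*) [RCLike 𝕂] : Set (Matrix (Fin 6) (Fin 6) 𝕂) :=
  {q | qᵀ ∈ LieP 𝕂}

/-- The block matrix `x_left = [[0,I₂,0],[0,0,I₂],[0,0,0]]` (2×2 blocks). -/
def xLeft (𝕂 : Type*) [RCLike 𝕂] : Matrix (Fin 6) (Fin 6) 𝕂 :=
  Matrix.of fun i j => if (j : ℕ) = (i : ℕ) + 2 then 1 else 0

/-- `x_right = x_left^τ`. -/
def xRight (𝕂 : Type*) [RCLike 𝕂] : Matrix (Fin 6) (Fin 6) 𝕂 := (xLeft 𝕂)ᵀ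

/-- The set `Lie(P)·x + x·Lie(P)^τ = {p·x + x·q : p ∈ Lie(P), q ∈ Lie(P)^τ}`. -/
def tanSet {𝕂 : Type*} [RCLike 𝕂] (x : Matrix (Fin 6) (Fin 6) 𝕂) :
    Set (Matrix (Fin 6) (Fin 6) 𝕂) :=
  {m | ∃ p ∈ LieP 𝕂, ∃ q ∈ LiePtau 𝕂, m = p * x + x * q}

/-- The lower right `i × j` corner block of a `6 × 6` matrix. -/
def corner {𝕂 : Type*} [RCLike 𝕂] (i j : ℕ) (hi : i ≤ 6) (hj : j ≤ 6)
    (x : Matrix (Fin 6) (Fin 6) 𝕂) : Matrix (Fin i) (Fin j) 𝕂 :=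
  Matrix.of fun a b =>
    x ⟨6 - i + a.1, by have := a.2; omega⟩ ⟨6 - j + b.1, by have := b.2; omega⟩

/-- The rank matrix `R(x) = [[r₄ₓ₄(x), r₄ₓ₂(x)], [r₂ₓ₄(x), r₂ₓ₂(x)]]`, where
`r_{i×j}(x)` is the rank of the lower right `i × j` corner block of `x`. -/
noncomputable def rankMatrix {𝕂 : Type*} [RCLike 𝕂] (x : Matrix (Fin 6) (Fin 6) 𝕂) :
    Matrix (Fin 2) (Fin 2) ℕ :=
  !![(corner 4 4 (by norm_num) (by norm_num) x).rank,
     (corner 4 2 (by norm_num) (by norm_num) x).rank;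
     (corner 2 4 (by norm_num) (by norm_num) x).rank,
     (corner 2 2 (by norm_num) (by norm_num) x).rank]

/-! Suppose `xRight * x = p * x + x * q` with `p ∈ LieP`, `q ∈ LiePtau`. Pick `w ≠ 0` in the
kernel of the lower right `4 × 2` corner and let `u = (0, w)`, so that `z = x u` lives in the
first block. Applied to `u`, the identity reads `xRight z = p z + x (q u)`, where `q u` again lives
in the last block. Rows 4–5 put the last block of `q u` into the kernel of the `2 × 2` corner,
which is the line through `w`; hence `q u = c u` and `xRight z = p z + c z` lies in the first
block. But `xRight` shifts the first block into the second, so `z = 0`, contradicting the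
invertibility of `x`. -/

namespace Matrix

variable {K m n α : Type*}

theorem finrank_ker_mulVecLin [Field K] [Fintype n] (M : Matrix m n K) :
    Module.finrank K (LinearMap.ker M.mulVecLin) = Fintype.card n - M.rank := by
  have := M.mulVecLin.finrank_range_add_finrank_ker
  rw [Module.finrank_fintype_fun_eq_card] at this
  rw [Matrix.rank]
  omega

theorem exists_mulVec_eq_zero_of_rank_lt [Field K] [Fintype n] (M : Matrix m n K)
    (h : M.rank < Fintype.card n) : ∃ v ≠ 0, M *ᵥ v = 0 := by
  have hpos : 0 < Module.finrank K (LinearMap.ker M.mulVecLin) := by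
    rw [finrank_ker_mulVecLin]; omega
  obtain ⟨⟨v, hv⟩, hv0⟩ := Module.finrank_pos_iff_exists_ne_zero.mp hpos
  exact ⟨v, fun h => hv0 (Subtype.ext h), hv⟩

theorem exists_smul_eq_of_rank_add_one_eq [Field K] [Fintype n] (M : Matrix m n K)
    (h : M.rank + 1 = Fintype.card n) {v w : n → K} (hv0 : v ≠ 0) (hv : M *ᵥ v = 0)
    (hw : M *ᵥ w = 0) : ∃ c : K, c • v = w := by
  have h1 : Module.finrank K (LinearMap.ker M.mulVecLin) = 1 := by
    rw [finrank_ker_mulVecLin]; omega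
  obtain ⟨c, hc⟩ := (finrank_eq_one_iff_of_nonzero' (⟨v, hv⟩ : LinearMap.ker M.mulVecLin)
    fun h => hv0 (congrArg Subtype.val h)).mp h1 ⟨w, hw⟩
  exact ⟨c, congrArg Subtype.val hc⟩

theorem BlockTriangular.mulVec_apply_eq_zero [NonUnitalNonAssocSemiring K] [Fintype m]
    [LinearOrder α] {M : Matrix m m K} {b : m → α} (hM : M.BlockTriangular b) {k : α}
    {v : m → K} (hv : ∀ j, k < b j → v j = 0) {i : m} (hi : k < b i) : (M *ᵥ v) i = 0 :=
  Finset.sum_eq_zero fun j _ => by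
    by_cases hj : k < b j
    · simp [hv j hj]
    · simp [hM (lt_of_le_of_lt (not_lt.mp hj) hi)]

end Matrix

theorem Fin.append_smul {m n : ℕ} {R M : Type*} [SMul R M] (c : R) (u : Fin m → M)
    (v : Fin n → M) : Fin.append (c • u) (c • v) = c • Fin.append u v := by
  ext i
  refine Fin.addCases (fun j => ?_) (fun j => ?_) i <;> simp

theorem Fin.eq_append_zero_of_castAdd {m n : ℕ} {M : Type*} [Zero M] {v : Fin (m + n) → M}
    (hv : ∀ i : Fin m, v (Fin.castAdd n i) = 0) :
    v = Fin.append (0 : Fin m → M) (fun j => v (Fin.natAdd m j)) := by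
  conv_lhs => rw [← Fin.append_castAdd_natAdd (f := v)]
  congr 1
  exact funext hv

theorem Fin.append_zero_apply_of_lt {m n : ℕ} {M : Type*} [Zero M] (v : Fin n → M)
    (i : Fin (m + n)) (hi : (i : ℕ) < m) : Fin.append (0 : Fin m → M) v i = 0 :=
  Fin.append_left 0 v ⟨i, hi⟩

section Blocks

open OrderDual

variable {𝕂 : Type*} [RCLike 𝕂]

theorem blockTriangular_of_mem_LieP {p : Matrix (Fin 6) (Fin 6) 𝕂} (hp : p ∈ LieP 𝕂) :
    p.BlockTriangular fun i => (i : ℕ) / 2 :=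
  fun i j => hp i j

theorem blockTriangular_of_mem_LiePtau {q : Matrix (Fin 6) (Fin 6) 𝕂} (hq : q ∈ LiePtau 𝕂) :
    q.BlockTriangular (toDual ∘ fun i => (i : ℕ) / 2) := by
  simpa using (blockTriangular_of_mem_LieP hq).transpose

theorem xRight_mulVec_apply (v : Fin 6 → 𝕂) {i j : Fin 6} (h : (i : ℕ) = j + 2) :
    (xRight 𝕂 *ᵥ v) i = v j := by
  have hij : ∀ k : Fin 6, (i : ℕ) = k + 2 ↔ k = j := fun k => by
    rw [h, Nat.add_right_cancel_iff, Fin.val_inj, eq_comm]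
  simp [xRight, xLeft, Matrix.mulVec, dotProduct, hij]

theorem corner_mulVec_apply {r : ℕ} (hr : r ≤ 6) (x : Matrix (Fin 6) (Fin 6) 𝕂)
    (w : Fin 2 → 𝕂) (a : Fin r) :
    (corner r 2 hr (by norm_num) x *ᵥ w) a =
      (x *ᵥ (Fin.append (0 : Fin 4 → 𝕂) w : Fin 6 → 𝕂)) ⟨6 - r + a, by omega⟩ := by
  simp only [corner, Matrix.mulVec, dotProduct, of_apply]
  change _ = ∑ j : Fin (4 + 2), _
  rw [Fin.sum_univ_add]
  simp

theorem corner_mulVec_eq_zero_iff {r : ℕ} (hr : r ≤ 6) (x : Matrix (Fin 6) (Fin 6) 𝕂)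
    (w : Fin 2 → 𝕂) :
    corner r 2 hr (by norm_num) x *ᵥ w = 0 ↔
      ∀ i : Fin 6, 6 - r ≤ (i : ℕ) → (x *ᵥ (Fin.append (0 : Fin 4 → 𝕂) w : Fin 6 → 𝕂)) i = 0 := by
  constructor
  · intro h i hi
    have := congrFun h ⟨i - (6 - r), by omega⟩
    rw [corner_mulVec_apply] at this
    convert this using 2
    · ext; simp only; omega
    · rfl
  · intro h
    funext a
    rw [corner_mulVec_apply]
    exact h _ (by simp)

theorem mulVec_apply_eq_zero_of_mem_LieP {p : Matrix (Fin 6) (Fin 6) 𝕂} (hp : p ∈ LieP 𝕂)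
    {z : Fin 6 → 𝕂} (hz : ∀ j : Fin 6, 2 ≤ (j : ℕ) → z j = 0) {i : Fin 6} (hi : 2 ≤ (i : ℕ)) :
    (p *ᵥ z) i = 0 :=
  (blockTriangular_of_mem_LieP hp).mulVec_apply_eq_zero (k := 0)
    (fun j hj => hz j (by omega)) (by omega)

theorem mulVec_apply_eq_zero_of_mem_LiePtau {q : Matrix (Fin 6) (Fin 6) 𝕂}
    (hq : q ∈ LiePtau 𝕂) {v : Fin 6 → 𝕂} (hv : ∀ j : Fin 6, (j : ℕ) < 4 → v j = 0) {i : Fin 6}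
    (hi : (i : ℕ) < 4) : (q *ᵥ v) i = 0 :=
  (blockTriangular_of_mem_LiePtau hq).mulVec_apply_eq_zero (k := toDual 2)
    (fun j hj => hv j (by rw [Function.comp_apply, toDual_lt_toDual] at hj; omega))
    (by rw [Function.comp_apply, toDual_lt_toDual]; omega)

theorem apply_eq_zero_of_xRight_mulVec_eq_add {p : Matrix (Fin 6) (Fin 6) 𝕂}
    (hp : p ∈ LieP 𝕂) {z v : Fin 6 → 𝕂} (hz : ∀ j : Fin 6, 2 ≤ (j : ℕ) → z j = 0)
    (h : xRight 𝕂 *ᵥ z = p *ᵥ z + v) {i : Fin 6} (hi : 4 ≤ (i : ℕ)) : v i = 0 := by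
  have := congrFun h i
  rwa [xRight_mulVec_apply z (j := ⟨i - 2, by omega⟩) (by simp; omega), hz _ (by simp; omega),
    Pi.add_apply, mulVec_apply_eq_zero_of_mem_LieP hp hz (by omega), zero_add, eq_comm] at this

theorem eq_zero_of_xRight_mulVec_eq_add_smul {p : Matrix (Fin 6) (Fin 6) 𝕂} (hp : p ∈ LieP 𝕂)
    {z : Fin 6 → 𝕂} (hz : ∀ j : Fin 6, 2 ≤ (j : ℕ) → z j = 0) (c : 𝕂)
    (h : xRight 𝕂 *ᵥ z = p *ᵥ z + c • z) : z = 0 := by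
  funext j
  by_cases hj : 2 ≤ (j : ℕ)
  · exact hz j hj
  · have := congrFun h ⟨j + 2, by omega⟩
    rwa [xRight_mulVec_apply z rfl, Pi.add_apply, mulVec_apply_eq_zero_of_mem_LieP hp hz (by simp),
      Pi.smul_apply, hz ⟨j + 2, by omega⟩ (by simp), smul_zero, add_zero] at this

end Blocks

/-- If `x ∈ GL₆(𝕂)` has lower right `4 × 2` corner block of rank `1` and lower right
`2 × 2` corner block of rank `1`, then `x_right·x ∉ Lie(P)·x + x·Lie(P)^τ`. -/
theorem xRight_transversal_of_second_column_one_one {𝕂 : Type*} [RCLike 𝕂]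
    (x : Matrix (Fin 6) (Fin 6) 𝕂) (hx : IsUnit x.det)
    (h42 : (corner 4 2 (by norm_num) (by norm_num) x).rank = 1)
    (h22 : (corner 2 2 (by norm_num) (by norm_num) x).rank = 1) :
    xRight 𝕂 * x ∉ tanSet x := by
  rintro ⟨p, hp, q, hq, heq⟩
  obtain ⟨w, hw0, hw⟩ :=
    (corner 4 2 (by norm_num) (by norm_num) x).exists_mulVec_eq_zero_of_rank_lt (by simp [h42])
  set u : Fin 6 → 𝕂 := Fin.append (0 : Fin 4 → 𝕂) w with hu
  have hxu : ∀ i : Fin 6, 2 ≤ (i : ℕ) → (x *ᵥ u) i = 0 := (corner_mulVec_eq_zero_iff _ x w).mp hw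
  have hmul : xRight 𝕂 *ᵥ (x *ᵥ u) = p *ᵥ (x *ᵥ u) + x *ᵥ (q *ᵥ u) := by
    simp only [mulVec_mulVec, heq, add_mulVec]
  obtain ⟨y, hy⟩ : ∃ y : Fin 2 → 𝕂, q *ᵥ u = Fin.append (0 : Fin 4 → 𝕂) y :=
    ⟨_, Fin.eq_append_zero_of_castAdd (m := 4) (n := 2) fun i =>
      mulVec_apply_eq_zero_of_mem_LiePtau hq (Fin.append_zero_apply_of_lt w) (by simp)⟩
  have hwy : ∃ c : 𝕂, c • w = y :=
    (corner 2 2 (by norm_num) (by norm_num) x).exists_smul_eq_of_rank_add_one_eq (by simp [h22]) hw0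
      ((corner_mulVec_eq_zero_iff _ x w).mpr fun i hi => hxu i (by omega))
      ((corner_mulVec_eq_zero_iff _ x y).mpr fun i hi =>
        hy ▸ apply_eq_zero_of_xRight_mulVec_eq_add hp hxu hmul hi)
  obtain ⟨c, rfl⟩ := hwy
  rw [← smul_zero c, Fin.append_smul, ← hu] at hy
  rw [hy, mulVec_smul] at hmul
  have hu0 : u = 0 := Matrix.mulVec_injective_iff_isUnit.mpr (x.isUnit_iff_isUnit_det.mpr hx)
    (by simpa using eq_zero_of_xRight_mulVec_eq_add_smul hp hxu c hmul)
  exact hw0 (funext fun b => by simpa [hu] using congrFun hu0 (Fin.natAdd 4 b))
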